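/- arXiv:2002.11437 — 4 statements merged into one kernel-verified Lean document; each statement's English description precedes it below -/
import Mathlib

section
/- Let N ≥ 1 and let λ : [7]^N → {±1,…,±N} satisfy λ(8−x₁,…,8−x_N) = −λ(x₁,…,x_N) for all x on the boundary of [7]^N (i.e., whenever some coordinate x_j ∈ {1,7}). Define λ'(x) = λ(x̂₁,…,x̂_N) for x ∈ [8]^N, where r̂ = r if r ≤ 4 and r̂ = r−1 if r ≥ 5. Then λ'(9−x₁,…,9−x_N) = −λ'(x₁,…,x_N) for all x on the boundary of [8]^N (i.e., whenever some coordinate x_j ∈ {1,8}). -/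
/-- The snake-embedding compression map on integers. -/
def hat (r : ℤ) : ℤ := if r ≤ 4 then r else r - 1

lemma hat_antipode {x : ℤ} (h1 : 1 ≤ x) (h8 : x ≤ 8) : hat (9 - x) = 8 - hat x := by
  unfold hat; split <;> split <;> omega

theorem stmt_2 (N : ℕ) (hN : 1 ≤ N) (lam : (Fin N → ℤ) → ℤ)
    (hrange : ∀ x : Fin N → ℤ, (∀ i, 1 ≤ x i ∧ x i ≤ 7) →
      1 ≤ |lam x| ∧ |lam x| ≤ (N : ℤ))
    (hsym : ∀ x : Fin N → ℤ, (∀ i, 1 ≤ x i ∧ x i ≤ 7) →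
      (∃ j, x j = 1 ∨ x j = 7) → lam (fun i => 8 - x i) = - lam x) :
    ∀ x : Fin N → ℤ, (∀ i, 1 ≤ x i ∧ x i ≤ 8) → (∃ j, x j = 1 ∨ x j = 8) →
      lam (fun i => hat (9 - x i)) = - lam (fun i => hat (x i)) := by
  intro x hx ⟨j, hj⟩
  have key : (fun i => hat (9 - x i)) = (fun i => 8 - hat (x i)) := by
    funext i; exact hat_antipode (hx i).1 (hx i).2
  rw [key]
  apply hsym
  · intro i
    have := hx i
    unfold hat; split <;> omega
  · refine ⟨j, ?_⟩
    have := hx j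
    unfold hat
    rcases hj with h | h <;> simp [h] <;> omega
end

section
/- Let B = { k/4 : k ∈ ℤ, |k| ≤ 3 } ⊂ [−1,1], let T(z) = max(−1, min(1, z)), and let g > 0, α ≥ 16g, and p ∈ ℕ with p·α ≤ 1/16. Then for every x ∈ ℝ, there is at most one index j ∈ {1,…,p} such that T(x + jα) ∈ (−1, 1) and dist(T(x + jα), B) < 8g, where dist(t, B) = min over b ∈ B of |t − b|. -/
/-- Truncation to the interval [-1,1]. -/
noncomputable def T (z : ℝ) : ℝ := max (-1) (min 1 z)

/-- The set of breakpoints {-3/4, -1/2, -1/4, 0, 1/4, 1/2, 3/4}. -/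
def B : Set ℝ := {t | ∃ k : ℤ, |k| ≤ 3 ∧ t = (k : ℝ) / 4}

lemma T_eq_of_mem (z : ℝ) (h1 : -1 < T z) (h2 : T z < 1) : T z = z := by
  unfold T at *
  have hz1 : z < 1 := by
    by_contra h
    push_neg at h
    simp [min_eq_left h] at h2
  have hz2 : -1 < z := by
    by_contra h
    push_neg at h
    rw [min_eq_right (by linarith), max_eq_left (by linarith)] at h1
    linarith
  rw [min_eq_right hz1.le, max_eq_right hz2.le]

lemma aux_not_lt (g α : ℝ) (p : ℕ) (hg : 0 < g) (hα : 16 * g ≤ α)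
    (hp : (p : ℝ) * α ≤ 1/16) (x : ℝ) (j ℓ : ℕ)
    (hj : j ∈ Finset.Icc 1 p) (hℓ : ℓ ∈ Finset.Icc 1 p)
    (H1 : -1 < T (x + j * α) ∧ T (x + j * α) < 1 ∧
        ∃ b ∈ B, |T (x + j * α) - b| < 8 * g)
    (H2 : -1 < T (x + ℓ * α) ∧ T (x + ℓ * α) < 1 ∧
        ∃ b ∈ B, |T (x + ℓ * α) - b| < 8 * g) : ¬ (j < ℓ) := by
  intro hjl
  simp only [Finset.mem_Icc] at hj hℓ
  obtain ⟨h1a, h1b, b1, ⟨k1, hk1, rfl⟩, hd1⟩ := H1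
  obtain ⟨h2a, h2b, b2, ⟨k2, hk2, rfl⟩, hd2⟩ := H2
  rw [T_eq_of_mem _ h1a h1b] at hd1
  rw [T_eq_of_mem _ h2a h2b] at hd2
  rw [abs_lt] at hd1 hd2
  have hα0 : 0 < α := by linarith
  have hjℓ : (j : ℝ) + 1 ≤ (ℓ : ℝ) := by exact_mod_cast hjl
  have hℓp : (ℓ : ℝ) ≤ (p : ℝ) := by exact_mod_cast hℓ.2
  have hj1 : (1 : ℝ) ≤ (j : ℝ) := by exact_mod_cast hj.1
  have hdα : α ≤ ((ℓ : ℝ) - j) * α := by nlinarith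
  have hdp : ((ℓ : ℝ) - j) * α ≤ (p : ℝ) * α := by nlinarith
  have hpos : (0 : ℝ) < ((k2 : ℝ) - k1) / 4 := by nlinarith [hd1.1, hd1.2, hd2.1, hd2.2]
  have hsmall : ((k2 : ℝ) - k1) / 4 < 1 / 4 := by nlinarith [hd1.1, hd1.2, hd2.1, hd2.2]
  have h1 : (0 : ℝ) < ((k2 - k1 : ℤ) : ℝ) := by push_cast; linarith
  have h2 : ((k2 - k1 : ℤ) : ℝ) < 1 := by push_cast; linarith
  have h1' : (0 : ℤ) < k2 - k1 := by exact_mod_cast h1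
  have h2' : (k2 - k1 : ℤ) < 1 := by exact_mod_cast h2
  omega

theorem stmt_9 (g α : ℝ) (p : ℕ) (hg : 0 < g) (hα : 16 * g ≤ α)
    (hp : (p : ℝ) * α ≤ 1/16) (x : ℝ) :
    ∀ j ∈ Finset.Icc 1 p, ∀ ℓ ∈ Finset.Icc 1 p,
      (-1 < T (x + j * α) ∧ T (x + j * α) < 1 ∧
        ∃ b ∈ B, |T (x + j * α) - b| < 8 * g) →
      (-1 < T (x + ℓ * α) ∧ T (x + ℓ * α) < 1 ∧
        ∃ b ∈ B, |T (x + ℓ * α) - b| < 8 * g) →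
      j = ℓ := by
  intro j hj ℓ hℓ H1 H2
  have h1 := aux_not_lt g α p hg hα hp x j ℓ hj hℓ H1 H2
  have h2 := aux_not_lt g α p hg hα hp x ℓ j hℓ hj H2 H1
  omega
end

section
/- Let 0 = a₀ < a₁ < … < a_m = 1 and let f : [0,1] → ℝ be a function that is constant on each open interval (a_{j−1}, a_j) for j = 1,…,m. Define s : [0,1] → ℝ by s(x) = 1 if x ∈ [a_{j−1}, (a_{j−1}+a_j)/2) for some j, and s(x) = −1 otherwise. Then ∫₀¹ f(x)·s(x) dx = 0. -/
/-!
On each piece `(a j, a (j + 1))` the function `f` is a constant `c`, while `s` is `1` on the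
left half and `-1` on the right half of the piece. Hence `f * s` integrates to
`c · ℓ/2 - c · ℓ/2 = 0` over every piece of length `ℓ`, and the integral over `[0, 1]` is the sum
of these zeros.
-/

open MeasureTheory Set

section ConstantOnIoo

variable {E : Type*} [NormedAddCommGroup E] {f : ℝ → E} {a b : ℝ} {c : E}

theorem intervalIntegrable_of_eqOn_Ioo (hab : a ≤ b) (hf : EqOn f (fun _ => c) (Ioo a b)) :
    IntervalIntegrable f volume a b :=
  (intervalIntegrable_iff_integrableOn_Ioo_of_le hab).2
    ((integrableOn_const measure_Ioo_lt_top.ne).congr_fun hf.symm measurableSet_Ioo)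

theorem intervalIntegral_eq_of_eqOn_Ioo [NormedSpace ℝ E] [CompleteSpace E] (hab : a ≤ b)
    (hf : EqOn f (fun _ => c) (Ioo a b)) :
    ∫ x in a..b, f x = (b - a) • c := by
  rw [intervalIntegral.integral_of_le hab, integral_Ioc_eq_integral_Ioo,
    setIntegral_congr_fun measurableSet_Ioo hf, setIntegral_const, Real.volume_real_Ioo_of_le hab]

theorem intervalIntegral_eq_zero_of_eqOn_halves [NormedSpace ℝ E] [CompleteSpace E]
    (hab : a ≤ b)
    (h₁ : EqOn f (fun _ => c) (Ioo a ((a + b) / 2)))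
    (h₂ : EqOn f (fun _ => -c) (Ioo ((a + b) / 2) b)) :
    IntervalIntegrable f volume a b ∧ ∫ x in a..b, f x = 0 := by
  have hmid₁ : a ≤ (a + b) / 2 := by linarith
  have hmid₂ : (a + b) / 2 ≤ b := by linarith
  have hi₁ := intervalIntegrable_of_eqOn_Ioo hmid₁ h₁
  have hi₂ := intervalIntegrable_of_eqOn_Ioo hmid₂ h₂
  refine ⟨hi₁.trans hi₂, ?_⟩
  rw [← intervalIntegral.integral_add_adjacent_intervals hi₁ hi₂,
    intervalIntegral_eq_of_eqOn_Ioo hmid₁ h₁, intervalIntegral_eq_of_eqOn_Ioo hmid₂ h₂,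
    smul_neg, ← sub_eq_add_neg, sub_eq_zero]
  congr 1
  ring

end ConstantOnIoo

section AlternatingSign

variable {m : ℕ} {a : ℕ → ℝ}

open scoped Classical in
noncomputable def halfSign (m : ℕ) (a : ℕ → ℝ) (x : ℝ) : ℝ :=
  if ∃ j < m, a j ≤ x ∧ x < (a j + a (j + 1)) / 2 then 1 else -1

theorem halfSign_of_mem_left_half {j : ℕ} (hj : j < m) {x : ℝ}
    (hx : x ∈ Ioo (a j) ((a j + a (j + 1)) / 2)) : halfSign m a x = 1 :=
  if_pos ⟨j, hj, hx.1.le, hx.2⟩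

theorem halfSign_of_mem_right_half (hmono : ∀ j < m, a j < a (j + 1)) {j : ℕ} (hj : j < m)
    {x : ℝ} (hx : x ∈ Ioo ((a j + a (j + 1)) / 2) (a (j + 1))) : halfSign m a x = -1 := by
  have ha : MonotoneOn a (Iic m) := (strictMonoOn_Iic_of_lt_succ hmono).monotoneOn
  refine if_neg ?_
  rintro ⟨k, hk, hkx, hxk⟩
  rcases lt_trichotomy k j with hkj | rfl | hjk
  · have : a (k + 1) ≤ a j := ha (mem_Iic.2 (by omega)) (mem_Iic.2 hj.le) hkj
    linarith [hmono k hk, hmono j hj, hx.1]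
  · linarith [hx.1]
  · have : a (j + 1) ≤ a k := ha (mem_Iic.2 (by omega)) (mem_Iic.2 hk.le) hjk
    linarith [hx.2]

end AlternatingSign

open scoped Classical in
theorem stmt_11_general (m : ℕ) (a : ℕ → ℝ)
    (h0 : a 0 = 0) (h1 : a m = 1)
    (hmono : ∀ j < m, a j < a (j + 1))
    (f : ℝ → ℝ)
    (hf : ∀ j < m, ∃ c : ℝ, ∀ x ∈ Set.Ioo (a j) (a (j + 1)), f x = c)
    (s : ℝ → ℝ)
    (hs : ∀ x : ℝ, s x =
      if ∃ j < m, a j ≤ x ∧ x < (a j + a (j + 1)) / 2 then (1 : ℝ) else -1) :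
    ∫ x in (0 : ℝ)..1, f x * s x = 0 := by
  have hsign : s = halfSign m a := funext hs
  have hpiece : ∀ j < m, IntervalIntegrable (fun x => f x * s x) volume (a j) (a (j + 1)) ∧
      ∫ x in (a j)..(a (j + 1)), f x * s x = 0 := by
    intro j hj
    obtain ⟨c, hc⟩ := hf j hj
    have hlt := hmono j hj
    refine intervalIntegral_eq_zero_of_eqOn_halves (c := c) hlt.le (fun x hx => ?_) fun x hx => ?_
    · rw [hsign, hc x ⟨hx.1, by linarith [hx.2]⟩, halfSign_of_mem_left_half hj hx, mul_one]
    · rw [hsign, hc x ⟨by linarith [hx.1], hx.2⟩, halfSign_of_mem_right_half hmono hj hx,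
        mul_neg_one]
  have hsum := intervalIntegral.sum_integral_adjacent_intervals fun k hk => (hpiece k hk).1
  rw [h0, h1] at hsum
  rw [← hsum]
  exact Finset.sum_eq_zero fun k hk => (hpiece k (Finset.mem_range.mp hk)).2

open scoped Classical in
theorem stmt_11 (m : ℕ) (hm : 1 ≤ m) (a : ℕ → ℝ)
    (h0 : a 0 = 0) (h1 : a m = 1)
    (hmono : ∀ j < m, a j < a (j + 1))
    (f : ℝ → ℝ)
    (hf : ∀ j < m, ∃ c : ℝ, ∀ x ∈ Set.Ioo (a j) (a (j + 1)), f x = c)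
    (s : ℝ → ℝ)
    (hs : ∀ x : ℝ, s x =
      if ∃ j < m, a j ≤ x ∧ x < (a j + a (j + 1)) / 2 then (1 : ℝ) else -1) :
    ∫ x in (0 : ℝ)..1, f x * s x = 0 :=
  stmt_11_general m a h0 h1 hmono f hf s hs
end

section
/- Let δ ∈ (0, 1], let J₁ and J₂ be disjoint intervals of ℝ of lengths 1−δ and 1 respectively, and let μ be the measure with constant density 1/(2−δ) on J₁ ∪ J₂ and 0 elsewhere (so μ is a probability measure). Then for every measurable function s : ℝ → {−1, +1} that is constant on J₂, it holds that |∫ s dμ| ≥ δ/2. -/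
open MeasureTheory

/-!
Up to the factor `1 / (2 - δ)` of the density, the integral is `∫_{J₁} s + ∫_{J₂} s`. On `J₂` the
sign `s` is a constant `±1`, contributing `±1`, while `∫_{J₁} s` has modulus at most `|J₁| = 1 - δ`.
Hence the integral has modulus at least `δ / (2 - δ) ≥ δ / 2`.
-/

theorem sub_le_abs_setIntegral_union {α : Type*} [MeasurableSpace α] {ν : Measure α}
    {A B : Set α} {f : α → ℝ} {v : ℝ} (hAB : Disjoint A B) (hB : MeasurableSet B)
    (hνA : ν A < ⊤) (hνB : ν B < ⊤) (hf : AEStronglyMeasurable f ν) (hf1 : ∀ x, |f x| ≤ 1)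
    (hfB : ∀ x ∈ B, f x = v) (hv : |v| = 1) :
    ν.real B - ν.real A ≤ |∫ x in A ∪ B, f x ∂ν| := by
  have hA_int : IntegrableOn f A ν :=
    .of_bound hνA hf.restrict 1 (.of_forall fun x => (Real.norm_eq_abs _).trans_le (hf1 x))
  have hB_int : IntegrableOn f B ν :=
    (integrableOn_const hνB.ne).congr_fun (fun x hx => (hfB x hx).symm) hB
  have hA_le : |∫ x in A, f x ∂ν| ≤ ν.real A := by
    simpa using norm_setIntegral_le_of_norm_le_const hνA
      (fun x _ => (Real.norm_eq_abs _).trans_le (hf1 x))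
  have hB_eq : ∫ x in B, f x ∂ν = ν.real B * v := by
    rw [setIntegral_congr_fun hB hfB, setIntegral_const, smul_eq_mul]
  have hB_abs : |∫ x in B, f x ∂ν| = ν.real B := by
    rw [hB_eq, abs_mul, hv, mul_one, abs_of_nonneg measureReal_nonneg]
  rw [setIntegral_union hAB hB hA_int hB_int]
  have htri := abs_sub_abs_le_abs_add (∫ x in B, f x ∂ν) (∫ x in A, f x ∂ν)
  rw [add_comm] at htri
  linarith

theorem stmt_14_general (δ a b : ℝ) (hδ1 : δ ≤ 1)
    (J₁ J₂ : Set ℝ) (hJ₁ : J₁ = Set.Icc a (a + (1 - δ)))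
    (hJ₂ : J₂ = Set.Icc b (b + 1)) (hdisj : Disjoint J₁ J₂)
    (μ : Measure ℝ)
    (hμ : μ = volume.withDensity
      ((J₁ ∪ J₂).indicator (fun _ => ENNReal.ofReal (1 / (2 - δ)))))
    (s : ℝ → ℝ) (hs : Measurable s) (hs1 : ∀ x, s x = 1 ∨ s x = -1)
    (hconst : ∀ x ∈ J₂, ∀ y ∈ J₂, s x = s y) :
    δ / 2 ≤ |∫ x, s x ∂μ| := by
  have hc : 0 < 1 / (2 - δ) := by apply div_pos <;> linarith
  have hmeas₂ : MeasurableSet J₂ := hJ₂ ▸ measurableSet_Icc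
  have hmeas : MeasurableSet (J₁ ∪ J₂) := (hJ₁ ▸ measurableSet_Icc).union hmeas₂
  have hμ_int : ∫ x, s x ∂μ = 1 / (2 - δ) * ∫ x in J₁ ∪ J₂, s x := by
    rw [hμ, withDensity_indicator hmeas, withDensity_const, integral_smul_measure,
      ENNReal.toReal_ofReal hc.le, smul_eq_mul]
  have hb : b ∈ J₂ := hJ₂ ▸ ⟨le_rfl, by linarith⟩
  have hvol₁ : volume.real J₁ = 1 - δ := by
    rw [hJ₁, Real.volume_real_Icc_of_le (by linarith), add_sub_cancel_left]
  have hvol₂ : volume.real J₂ = 1 := by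
    rw [hJ₂, Real.volume_real_Icc_of_le (by linarith), add_sub_cancel_left]
  have hδ_le : δ ≤ |∫ x in J₁ ∪ J₂, s x| := by
    have key := sub_le_abs_setIntegral_union (ν := volume) hdisj hmeas₂
      (by rw [hJ₁]; exact measure_Icc_lt_top) (by rw [hJ₂]; exact measure_Icc_lt_top)
      hs.aestronglyMeasurable (fun x => by rcases hs1 x with h | h <;> simp [h])
      (fun x hx => hconst x hx b hb) (by rcases hs1 b with h | h <;> simp [h])
    rw [hvol₁, hvol₂] at key
    linarith
  rw [hμ_int, abs_mul, abs_of_pos hc]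
  calc δ / 2 ≤ 1 / (2 - δ) * δ := by
        rw [one_div_mul_eq_div, div_le_div_iff₀ two_pos (by linarith)]
        nlinarith [sq_nonneg δ]
    _ ≤ 1 / (2 - δ) * |∫ x in J₁ ∪ J₂, s x| := by gcongr

theorem stmt_14 (δ a b : ℝ) (hδ0 : 0 < δ) (hδ1 : δ ≤ 1)
    (J₁ J₂ : Set ℝ) (hJ₁ : J₁ = Set.Icc a (a + (1 - δ)))
    (hJ₂ : J₂ = Set.Icc b (b + 1)) (hdisj : Disjoint J₁ J₂)
    (μ : Measure ℝ)
    (hμ : μ = volume.withDensity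
      ((J₁ ∪ J₂).indicator (fun _ => ENNReal.ofReal (1 / (2 - δ)))))
    (s : ℝ → ℝ) (hs : Measurable s) (hs1 : ∀ x, s x = 1 ∨ s x = -1)
    (hconst : ∀ x ∈ J₂, ∀ y ∈ J₂, s x = s y) :
    δ / 2 ≤ |∫ x, s x ∂μ| :=
  stmt_14_general δ a b hδ1 J₁ J₂ hJ₁ hJ₂ hdisj μ hμ s hs hs1 hconst
end
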